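/- For n ≥ 1, the number of 2-colored set partitions of [n] avoiding the three patterns 1^1 1^1, 1^1 1^2, and 1^2 2^1 in the pattern sense equals the number of 2-colored set partitions of [n] avoiding the three patterns 1^1 1^2, 1^1 2^1, and 1^1 2^2 in the pattern sense (both equal 2n). -/

import Mathlib

/-- `i` and `j` lie in the same block of the set partition `P`. -/
def SameBlock {n : ℕ} (P : Finpartition (Finset.univ : Finset (Fin n))) (i j : Fin n) : Prop :=
  ∃ b ∈ P.parts, i ∈ b ∧ j ∈ b

/-- A `k`-colored set partition of `[n]`: a set partition of `Fin n` together with a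
color from `Fin k` for each element. -/
structure CPart (n k : ℕ) where
  part : Finpartition (Finset.univ : Finset (Fin n))
  col : Fin n → Fin k

/-- Contains the pattern 1^1 1^1 : two elements of the same block with equal colors. -/
def Has11 {n k : ℕ} (σ : CPart n k) : Prop :=
  ∃ i j : Fin n, i < j ∧ SameBlock σ.part i j ∧ σ.col i = σ.col j

/-- Contains the pattern 1^1 1^2 : same block, smaller element has strictly smaller color. -/
def Has112 {n k : ℕ} (σ : CPart n k) : Prop :=
  ∃ i j : Fin n, i < j ∧ SameBlock σ.part i j ∧ σ.col i < σ.col j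

/-- Contains the pattern 1^2 1^1 : same block, smaller element has strictly larger color. -/
def Has121 {n k : ℕ} (σ : CPart n k) : Prop :=
  ∃ i j : Fin n, i < j ∧ SameBlock σ.part i j ∧ σ.col j < σ.col i

/-- Contains the pattern 1^1 2^1 : different blocks, equal colors. -/
def Has1121 {n k : ℕ} (σ : CPart n k) : Prop :=
  ∃ i j : Fin n, i < j ∧ ¬ SameBlock σ.part i j ∧ σ.col i = σ.col j

/-- Contains the pattern 1^1 2^2 : different blocks, smaller element has strictly smaller color. -/
def Has1122 {n k : ℕ} (σ : CPart n k) : Prop :=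
  ∃ i j : Fin n, i < j ∧ ¬ SameBlock σ.part i j ∧ σ.col i < σ.col j

/-- Contains the pattern 1^2 2^1 : different blocks, smaller element has strictly larger color. -/
def Has1221 {n k : ℕ} (σ : CPart n k) : Prop :=
  ∃ i j : Fin n, i < j ∧ ¬ SameBlock σ.part i j ∧ σ.col j < σ.col i

/-- The Bell number: the number of set partitions of an `m`-element set. -/
noncomputable def bell (m : ℕ) : ℕ := Nat.card (Finpartition (Finset.univ : Finset (Fin m)))


section Aux
variable {n : ℕ}

/-! ### Basic facts about `SameBlock` -/

lemma sameBlock_iff_mem_part {P : Finpartition (Finset.univ : Finset (Fin n))} {a b : Fin n} :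
    SameBlock P a b ↔ b ∈ P.part a := by
  constructor
  · rintro ⟨t, ht, hat, hbt⟩
    rw [P.part_eq_of_mem ht hat]; exact hbt
  · intro h
    exact ⟨P.part a, P.part_mem.mpr (Finset.mem_univ a), P.mem_part (Finset.mem_univ a), h⟩

lemma sameBlock_ofSetoid (s : Setoid (Fin n)) [DecidableRel s.r] (a b : Fin n) :
    SameBlock (Finpartition.ofSetoid s) a b ↔ s.r a b := by
  rw [sameBlock_iff_mem_part, Finpartition.mem_part_ofSetoid_iff_rel]

lemma sameBlock_refl (P : Finpartition (Finset.univ : Finset (Fin n))) (a : Fin n) :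
    SameBlock P a a :=
  sameBlock_iff_mem_part.mpr (P.mem_part (Finset.mem_univ a))

lemma sameBlock_symm {P : Finpartition (Finset.univ : Finset (Fin n))} {a b : Fin n}
    (h : SameBlock P a b) : SameBlock P b a := by
  obtain ⟨t, ht, h1, h2⟩ := h; exact ⟨t, ht, h2, h1⟩

lemma sameBlock_trans {P : Finpartition (Finset.univ : Finset (Fin n))} {a b c : Fin n}
    (h : SameBlock P a b) (h' : SameBlock P b c) : SameBlock P a c := by
  obtain ⟨t, ht, h1, h2⟩ := h
  obtain ⟨u, hu, h3, h4⟩ := h'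
  exact ⟨t, ht, h1, by rwa [P.eq_of_mem_parts ht hu h2 h3]⟩

lemma finpartition_ext {P Q : Finpartition (Finset.univ : Finset (Fin n))}
    (h : ∀ a b, SameBlock P a b ↔ SameBlock Q a b) : P = Q := by
  have hpart : ∀ a, P.part a = Q.part a := by
    intro a
    ext b
    rw [← sameBlock_iff_mem_part, ← sameBlock_iff_mem_part]
    exact h a b
  ext t
  constructor
  · intro ht
    obtain ⟨a, ha⟩ := P.nonempty_of_mem_parts ht
    rw [← P.part_eq_of_mem ht ha, hpart]
    exact Q.part_mem.mpr (Finset.mem_univ a)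
  · intro ht
    obtain ⟨a, ha⟩ := Q.nonempty_of_mem_parts ht
    rw [← Q.part_eq_of_mem ht ha, ← hpart]
    exact P.part_mem.mpr (Finset.mem_univ a)

lemma cpext {σ τ : CPart n 2} (h1 : σ.part = τ.part) (h2 : σ.col = τ.col) : σ = τ := by
  cases σ; cases τ; cases h1; cases h2; rfl

/-! ### Setoids and colorings -/

def eqS (n : ℕ) : Setoid (Fin n) := ⟨(· = ·), ⟨fun _ => rfl, Eq.symm, Eq.trans⟩⟩
instance : DecidableRel (eqS n).r := fun a b => inferInstanceAs (Decidable (a = b))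

def topS (n : ℕ) : Setoid (Fin n) :=
  ⟨fun _ _ => True, ⟨fun _ => trivial, fun _ => trivial, fun _ _ => trivial⟩⟩
instance : DecidableRel (topS n).r := fun _ _ => inferInstanceAs (Decidable True)

def pairS (n : ℕ) (a b : Fin n) : Setoid (Fin n) :=
  ⟨fun x y => x = y ∨ (x = a ∧ y = b) ∨ (x = b ∧ y = a),
   ⟨fun _ => Or.inl rfl, by tauto, by
      rintro x y z h1 h2
      rcases h1 with rfl | ⟨rfl, rfl⟩ | ⟨rfl, rfl⟩ <;>
        rcases h2 with rfl | ⟨h, rfl⟩ | ⟨h, rfl⟩ <;> tauto⟩⟩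
instance (a b : Fin n) : DecidableRel (pairS n a b).r := fun _ _ =>
  inferInstanceAs (Decidable (_ ∨ _))

def splitS (n : ℕ) (m : ℕ) : Setoid (Fin n) :=
  ⟨fun x y => ((x : ℕ) ≤ m ↔ (y : ℕ) ≤ m),
   ⟨fun _ => Iff.rfl, Iff.symm, Iff.trans⟩⟩
instance (m : ℕ) : DecidableRel (splitS n m).r := fun _ _ =>
  inferInstanceAs (Decidable (_ ↔ _))

lemma eqS_r {a b : Fin n} : (eqS n).r a b ↔ a = b := Iff.rfl
lemma topS_r {a b : Fin n} : (topS n).r a b ↔ True := Iff.rfl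
lemma pairS_r {a b x y : Fin n} :
    (pairS n a b).r x y ↔ (x = y ∨ (x = a ∧ y = b) ∨ (x = b ∧ y = a)) := Iff.rfl
lemma splitS_r {m : ℕ} {x y : Fin n} :
    (splitS n m).r x y ↔ ((x : ℕ) ≤ m ↔ (y : ℕ) ≤ m) := Iff.rfl

def colA (n a : ℕ) (x : Fin n) : Fin 2 :=
  if (x : ℕ) = a then 1 else if (x : ℕ) ≤ a + 1 then 0 else 1

def colB (n m : ℕ) (x : Fin n) : Fin 2 := if (x : ℕ) ≤ m then 1 else 0

/-! ### Fin 2 arithmetic -/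

lemma fin2_cases (x : Fin 2) : x = 0 ∨ x = 1 := by fin_cases x <;> simp
lemma fin2_lt {x y : Fin 2} (h : y < x) : x = 1 ∧ y = 0 := by
  fin_cases x <;> fin_cases y <;> simp_all
lemma fin2_not_lt {x y : Fin 2} (h1 : ¬ x = y) (h2 : ¬ x < y) : y < x := by
  fin_cases x <;> fin_cases y <;> simp_all
lemma fin2_one_le {x : Fin 2} (h : 1 ≤ x) : x = 1 := by fin_cases x <;> simp_all
lemma fin2_le_zero {x : Fin 2} (h : x ≤ 0) : x = 0 := by fin_cases x <;> simp_all
lemma fin2_eq_iff {x y : Fin 2} : x = y ↔ (x = 1 ↔ y = 1) := by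
  fin_cases x <;> fin_cases y <;> simp

/-! ### Index types -/

abbrev XT (n : ℕ) := {c : Fin n → Fin 2 // Monotone c} ⊕ {a : Fin n // (a : ℕ) + 1 < n}
abbrev YT (n : ℕ) := {c : Fin n → Fin 2 // Antitone c} ⊕ {a : Fin n // (a : ℕ) + 1 < n}

def revEquiv : {c : Fin n → Fin 2 // Monotone c} ≃ {c : Fin n → Fin 2 // Antitone c} where
  toFun c := ⟨c.1 ∘ Fin.rev, c.2.comp_antitone fun _ _ h => Fin.rev_le_rev.mpr h⟩
  invFun c := ⟨c.1 ∘ Fin.rev, c.2.comp fun _ _ h => Fin.rev_le_rev.mpr h⟩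
  left_inv c := by ext x; simp [Fin.rev_rev]
  right_inv c := by ext x; simp [Fin.rev_rev]

def FA (x : XT n) : CPart n 2 :=
  match x with
  | .inl c => ⟨Finpartition.ofSetoid (eqS n), c.1⟩
  | .inr a => ⟨Finpartition.ofSetoid (pairS n a.1 ⟨(a.1 : ℕ) + 1, a.2⟩), colA n a.1⟩

def FB (y : YT n) : CPart n 2 :=
  match y with
  | .inl c => ⟨Finpartition.ofSetoid (topS n), c.1⟩
  | .inr a => ⟨Finpartition.ofSetoid (splitS n a.1), colB n a.1⟩


/-! ### Color computation lemmas -/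

lemma colA_one_iff {a : ℕ} {x : Fin n} : colA n a x = 1 ↔ ((x : ℕ) = a ∨ a + 1 < (x : ℕ)) := by
  rw [colA]; split_ifs <;> simp <;> omega

lemma colA_zero_iff {a : ℕ} {x : Fin n} : colA n a x = 0 ↔ ((x : ℕ) ≠ a ∧ (x : ℕ) ≤ a + 1) := by
  rw [colA]; split_ifs <;> simp <;> omega

lemma colB_one_iff {m : ℕ} {x : Fin n} : colB n m x = 1 ↔ (x : ℕ) ≤ m := by
  rw [colB]; split_ifs <;> simp_all

lemma colB_zero_iff {m : ℕ} {x : Fin n} : colB n m x = 0 ↔ ¬ (x : ℕ) ≤ m := by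
  rw [colB]; split_ifs <;> simp_all

/-! ### FA and FB avoid the patterns -/

lemma FA_part_inl (c : {c : Fin n → Fin 2 // Monotone c}) :
    (FA (Sum.inl c : XT n)).part = Finpartition.ofSetoid (eqS n) := rfl
lemma FA_col_inl (c : {c : Fin n → Fin 2 // Monotone c}) :
    (FA (Sum.inl c : XT n)).col = c.1 := rfl
lemma FA_part_inr (a : {a : Fin n // (a : ℕ) + 1 < n}) :
    (FA (Sum.inr a : XT n)).part
      = Finpartition.ofSetoid (pairS n a.1 ⟨(a.1 : ℕ) + 1, a.2⟩) := rfl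
lemma FA_col_inr (a : {a : Fin n // (a : ℕ) + 1 < n}) :
    (FA (Sum.inr a : XT n)).col = colA n a.1 := rfl

lemma FB_part_inl (c : {c : Fin n → Fin 2 // Antitone c}) :
    (FB (Sum.inl c : YT n)).part = Finpartition.ofSetoid (topS n) := rfl
lemma FB_col_inl (c : {c : Fin n → Fin 2 // Antitone c}) :
    (FB (Sum.inl c : YT n)).col = c.1 := rfl
lemma FB_part_inr (a : {a : Fin n // (a : ℕ) + 1 < n}) :
    (FB (Sum.inr a : YT n)).part = Finpartition.ofSetoid (splitS n a.1) := rfl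
lemma FB_col_inr (a : {a : Fin n // (a : ℕ) + 1 < n}) :
    (FB (Sum.inr a : YT n)).col = colB n a.1 := rfl

lemma FA_avoid (x : XT n) : ¬ Has11 (FA x) ∧ ¬ Has112 (FA x) ∧ ¬ Has1221 (FA x) := by
  match x with
  | .inl c =>
    refine ⟨?_, ?_, ?_⟩
    · rintro ⟨i, j, hij, hsb, _⟩
      rw [FA_part_inl, sameBlock_ofSetoid, eqS_r] at hsb
      exact absurd hsb hij.ne
    · rintro ⟨i, j, hij, hsb, _⟩
      rw [FA_part_inl, sameBlock_ofSetoid, eqS_r] at hsb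
      exact absurd hsb hij.ne
    · rintro ⟨i, j, hij, _, hc⟩
      rw [FA_col_inl] at hc
      exact absurd (c.2 hij.le) (not_le.mpr hc)
  | .inr a =>
    have hsb' : ∀ i j : Fin n,
        SameBlock (FA (Sum.inr a : XT n)).part i j ↔
          (i = j ∨ (i = a.1 ∧ (j : ℕ) = (a.1 : ℕ) + 1) ∨ ((i : ℕ) = (a.1 : ℕ) + 1 ∧ j = a.1)) := by
      intro i j
      rw [FA_part_inr, sameBlock_ofSetoid, pairS_r]
      constructor
      · rintro (h | ⟨h1, h2⟩ | ⟨h1, h2⟩)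
        · exact Or.inl h
        · exact Or.inr (Or.inl ⟨h1, by rw [h2]⟩)
        · exact Or.inr (Or.inr ⟨by rw [h1], h2⟩)
      · rintro (h | ⟨h1, h2⟩ | ⟨h1, h2⟩)
        · exact Or.inl h
        · exact Or.inr (Or.inl ⟨h1, Fin.ext h2⟩)
        · exact Or.inr (Or.inr ⟨Fin.ext h1, h2⟩)
    refine ⟨?_, ?_, ?_⟩
    · rintro ⟨i, j, hij, hsb, hc⟩
      have hij' : (i : ℕ) < (j : ℕ) := hij
      rw [hsb'] at hsb
      rw [FA_col_inr] at hc
      rcases hsb with h | ⟨h1, h2⟩ | ⟨h1, h2⟩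
      · exact absurd h hij.ne
      · have e1 : colA n a.1 i = 1 := colA_one_iff.mpr (Or.inl (by rw [h1]))
        have e2 : colA n a.1 j = 0 := colA_zero_iff.mpr (by subst h1; omega)
        rw [e1, e2] at hc; exact absurd hc (by decide)
      · subst h2; omega
    · rintro ⟨i, j, hij, hsb, hc⟩
      have hij' : (i : ℕ) < (j : ℕ) := hij
      rw [hsb'] at hsb
      rw [FA_col_inr] at hc
      rcases hsb with h | ⟨h1, h2⟩ | ⟨h1, h2⟩
      · exact absurd h hij.ne
      · have e1 : colA n a.1 i = 1 := colA_one_iff.mpr (Or.inl (by rw [h1]))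
        have e2 : colA n a.1 j = 0 := colA_zero_iff.mpr (by subst h1; omega)
        rw [e1, e2] at hc; exact absurd hc (by decide)
      · subst h2; omega
    · rintro ⟨i, j, hij, hsb, hc⟩
      have hij' : (i : ℕ) < (j : ℕ) := hij
      rw [hsb'] at hsb
      rw [FA_col_inr] at hc
      obtain ⟨e1, e2⟩ := fin2_lt hc
      rw [colA_one_iff] at e1
      rw [colA_zero_iff] at e2
      rcases e1 with e1 | e1
      · exact hsb (Or.inr (Or.inl ⟨Fin.ext e1, by omega⟩))
      · omega

lemma FB_avoid (y : YT n) : ¬ Has112 (FB y) ∧ ¬ Has1121 (FB y) ∧ ¬ Has1122 (FB y) := by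
  match y with
  | .inl c =>
    refine ⟨?_, ?_, ?_⟩
    · rintro ⟨i, j, hij, _, hc⟩
      rw [FB_col_inl] at hc
      exact absurd (c.2 hij.le) (not_le.mpr hc)
    · rintro ⟨i, j, hij, hsb, _⟩
      rw [FB_part_inl, sameBlock_ofSetoid] at hsb
      exact hsb trivial
    · rintro ⟨i, j, hij, hsb, _⟩
      rw [FB_part_inl, sameBlock_ofSetoid] at hsb
      exact hsb trivial
  | .inr a =>
    have hsb' : ∀ i j : Fin n,
        SameBlock (FB (Sum.inr a : YT n)).part i j ↔ ((i : ℕ) ≤ a.1 ↔ (j : ℕ) ≤ a.1) := by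
      intro i j
      rw [FB_part_inr, sameBlock_ofSetoid, splitS_r]
    refine ⟨?_, ?_, ?_⟩
    · rintro ⟨i, j, hij, hsb, hc⟩
      have hij' : (i : ℕ) < (j : ℕ) := hij
      rw [hsb'] at hsb
      rw [FB_col_inr] at hc
      obtain ⟨e1, e2⟩ := fin2_lt hc
      rw [colB_one_iff] at e1
      rw [colB_zero_iff] at e2
      omega
    · rintro ⟨i, j, hij, hsb, hc⟩
      have hij' : (i : ℕ) < (j : ℕ) := hij
      rw [hsb'] at hsb
      rw [FB_col_inr] at hc
      rcases fin2_cases (colB n a.1 i) with e | e <;> rw [e] at hc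
      · rw [colB_zero_iff] at e
        rw [eq_comm, colB_zero_iff] at hc
        exact hsb (by omega)
      · rw [colB_one_iff] at e
        rw [eq_comm, colB_one_iff] at hc
        exact hsb (by omega)
    · rintro ⟨i, j, hij, hsb, hc⟩
      have hij' : (i : ℕ) < (j : ℕ) := hij
      rw [hsb'] at hsb
      rw [FB_col_inr] at hc
      obtain ⟨e1, e2⟩ := fin2_lt hc
      rw [colB_one_iff] at e1
      rw [colB_zero_iff] at e2
      omega


/-! ### Injectivity -/

lemma colA_ne {a a' : Fin n} (h : (a : ℕ) < (a' : ℕ)) :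
    colA n (a : ℕ) ≠ colA n (a' : ℕ) := by
  intro hc
  by_cases hx : (a' : ℕ) = (a : ℕ) + 1
  · have e1 : colA n (a : ℕ) a' = 0 := colA_zero_iff.mpr ⟨by omega, by omega⟩
    have e2 : colA n (a' : ℕ) a' = 1 := colA_one_iff.mpr (Or.inl rfl)
    rw [← hc, e1] at e2
    exact absurd e2 (by decide)
  · have e1 : colA n (a : ℕ) a = 1 := colA_one_iff.mpr (Or.inl rfl)
    have e2 : colA n (a' : ℕ) a = 0 := colA_zero_iff.mpr ⟨by omega, by omega⟩
    rw [← hc, e1] at e2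
    exact absurd e2 (by decide)

lemma FA_inl_ne_inr (c : {c : Fin n → Fin 2 // Monotone c}) (a : {a : Fin n // (a : ℕ) + 1 < n}) :
    FA (Sum.inl c : XT n) ≠ FA (Sum.inr a) := by
  intro h
  have hp := congrArg CPart.part h
  rw [FA_part_inl, FA_part_inr] at hp
  have h2 : SameBlock (Finpartition.ofSetoid (pairS n a.1 ⟨(a.1 : ℕ) + 1, a.2⟩)) a.1
      ⟨(a.1 : ℕ) + 1, a.2⟩ :=
    (sameBlock_ofSetoid _ _ _).mpr (Or.inr (Or.inl ⟨rfl, rfl⟩))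
  rw [← hp, sameBlock_ofSetoid, eqS_r] at h2
  have := congrArg Fin.val h2
  simp at this

lemma FA_inj : Function.Injective (FA : XT n → CPart n 2) := by
  rintro (c | a) (c' | a') h
  · have := congrArg CPart.col h
    rw [FA_col_inl, FA_col_inl] at this
    rw [Subtype.ext this]
  · exact absurd h (FA_inl_ne_inr c a')
  · exact absurd h.symm (FA_inl_ne_inr c' a)
  · have hc := congrArg CPart.col h
    rw [FA_col_inr, FA_col_inr] at hc
    rcases lt_trichotomy (a.1 : ℕ) (a'.1 : ℕ) with hlt | heq | hlt
    · exact absurd hc (colA_ne hlt)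
    · congr 1
      exact Subtype.ext (Fin.ext heq)
    · exact absurd hc.symm (colA_ne hlt)

lemma FB_inl_ne_inr (c : {c : Fin n → Fin 2 // Antitone c}) (a : {a : Fin n // (a : ℕ) + 1 < n}) :
    FB (Sum.inl c : YT n) ≠ FB (Sum.inr a) := by
  intro h
  have hp := congrArg CPart.part h
  rw [FB_part_inl, FB_part_inr] at hp
  have h2 : SameBlock (Finpartition.ofSetoid (topS n)) a.1 ⟨(a.1 : ℕ) + 1, a.2⟩ :=
    (sameBlock_ofSetoid _ _ _).mpr trivial
  rw [hp, sameBlock_ofSetoid, splitS_r] at h2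
  simp at h2

lemma colB_ne {a a' : Fin n} (h : (a : ℕ) < (a' : ℕ)) (ha : (a : ℕ) + 1 < n) :
    colB n (a : ℕ) ≠ colB n (a' : ℕ) := by
  intro hc
  have e1 : colB n (a : ℕ) ⟨(a : ℕ) + 1, ha⟩ = 0 := colB_zero_iff.mpr (by simp)
  have e2 : colB n (a' : ℕ) ⟨(a : ℕ) + 1, ha⟩ = 1 := colB_one_iff.mpr (by simp; omega)
  rw [← hc, e1] at e2
  exact absurd e2 (by decide)

lemma FB_inj : Function.Injective (FB : YT n → CPart n 2) := by
  rintro (c | a) (c' | a') h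
  · have := congrArg CPart.col h
    rw [FB_col_inl, FB_col_inl] at this
    rw [Subtype.ext this]
  · exact absurd h (FB_inl_ne_inr c a')
  · exact absurd h.symm (FB_inl_ne_inr c' a)
  · have hc := congrArg CPart.col h
    rw [FB_col_inr, FB_col_inr] at hc
    rcases lt_trichotomy (a.1 : ℕ) (a'.1 : ℕ) with hlt | heq | hlt
    · exact absurd hc (colB_ne hlt a.2)
    · congr 1
      exact Subtype.ext (Fin.ext heq)
    · exact absurd hc.symm (colB_ne hlt a'.2)

/-! ### Key structure lemmas -/

lemma keyA {σ : CPart n 2} (h : ¬ Has11 σ ∧ ¬ Has112 σ ∧ ¬ Has1221 σ) :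
    (∀ i j : Fin n, i < j → SameBlock σ.part i j → σ.col i = 1 ∧ σ.col j = 0) ∧
    (∀ i j : Fin n, i < j → ¬ SameBlock σ.part i j → σ.col i ≤ σ.col j) := by
  obtain ⟨h1, h2, h3⟩ := h
  constructor
  · intro i j hij hsb
    have hne : ¬ σ.col i = σ.col j := fun e => h1 ⟨i, j, hij, hsb, e⟩
    have hnlt : ¬ σ.col i < σ.col j := fun e => h2 ⟨i, j, hij, hsb, e⟩
    exact fin2_lt (fin2_not_lt hne hnlt)
  · intro i j hij hsb
    by_contra hle
    exact h3 ⟨i, j, hij, hsb, not_le.mp hle⟩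

lemma keyB {σ : CPart n 2} (h : ¬ Has112 σ ∧ ¬ Has1121 σ ∧ ¬ Has1122 σ) :
    (∀ i j : Fin n, i < j → ¬ SameBlock σ.part i j → σ.col i = 1 ∧ σ.col j = 0) ∧
    (∀ i j : Fin n, i < j → SameBlock σ.part i j → σ.col j ≤ σ.col i) := by
  obtain ⟨h1, h2, h3⟩ := h
  constructor
  · intro i j hij hsb
    have hne : ¬ σ.col i = σ.col j := fun e => h2 ⟨i, j, hij, hsb, e⟩
    have hnlt : ¬ σ.col i < σ.col j := fun e => h3 ⟨i, j, hij, hsb, e⟩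
    exact fin2_lt (fin2_not_lt hne hnlt)
  · intro i j hij hsb
    by_contra hle
    exact h1 ⟨i, j, hij, hsb, not_le.mp hle⟩


/-! ### Surjectivity of FA -/

lemma FA_surj (σ : CPart n 2) (h : ¬ Has11 σ ∧ ¬ Has112 σ ∧ ¬ Has1221 σ) :
    ∃ x : XT n, FA x = σ := by
  obtain ⟨k1, k2⟩ := keyA h
  by_cases htriv : ∀ i j : Fin n, SameBlock σ.part i j → i = j
  · have mono : Monotone σ.col := by
      intro i j hij
      rcases eq_or_lt_of_le hij with rfl | hlt
      · exact le_refl _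
      · exact k2 i j hlt (fun hs => absurd (htriv _ _ hs) hlt.ne)
    refine ⟨Sum.inl ⟨σ.col, mono⟩, cpext ?_ rfl⟩
    rw [FA_part_inl]
    apply finpartition_ext
    intro x y
    rw [sameBlock_ofSetoid, eqS_r]
    constructor
    · rintro rfl; exact sameBlock_refl _ _
    · exact htriv x y
  · push_neg at htriv
    obtain ⟨a0, b0, hsb0, hne0⟩ := htriv
    obtain ⟨a, b, hab, hsb⟩ : ∃ a b : Fin n, a < b ∧ SameBlock σ.part a b := by
      rcases hne0.lt_or_gt with h' | h'
      · exact ⟨a0, b0, h', hsb0⟩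
      · exact ⟨b0, a0, h', sameBlock_symm hsb0⟩
    clear hsb0 hne0
    have pair_succ : ∀ x y : Fin n, x < y → SameBlock σ.part x y → (y : ℕ) = (x : ℕ) + 1 := by
      intro x y hxy hs
      by_contra hne
      have hxy' : (x : ℕ) < (y : ℕ) := hxy
      have hz : (x : ℕ) + 1 < n := by have := y.isLt; omega
      set z : Fin n := ⟨(x : ℕ) + 1, hz⟩ with hzdef
      have hxz : x < z := by rw [Fin.lt_def]; simp [hzdef]
      have hzy : z < y := by rw [Fin.lt_def]; simp [hzdef]; omega
      obtain ⟨cx1, cy0⟩ := k1 x y hxy hs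
      by_cases hs2 : SameBlock σ.part x z
      · obtain ⟨_, cz0⟩ := k1 x z hxz hs2
        have hzy' : SameBlock σ.part z y := sameBlock_trans (sameBlock_symm hs2) hs
        obtain ⟨cz1, _⟩ := k1 z y hzy hzy'
        rw [cz0] at cz1
        exact absurd cz1 (by decide)
      · have hle := k2 x z hxz hs2
        rw [cx1] at hle
        have cz1 := fin2_one_le hle
        have hs3 : ¬ SameBlock σ.part z y :=
          fun hzy' => hs2 (sameBlock_trans hs (sameBlock_symm hzy'))
        have hle2 := k2 z y hzy hs3
        rw [cz1, cy0] at hle2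
        exact absurd hle2 (by decide)
    have no_two : ∀ x y x' y' : Fin n, x < y → x' < y' → SameBlock σ.part x y →
        SameBlock σ.part x' y' → (x : ℕ) < (x' : ℕ) → False := by
      intro x y x' y' hxy hxy' hs hs' hlt
      obtain ⟨cx1, cy0⟩ := k1 x y hxy hs
      obtain ⟨cx'1, cy'0⟩ := k1 x' y' hxy' hs'
      have e1 : (y : ℕ) = (x : ℕ) + 1 := pair_succ x y hxy hs
      have e2 : (y' : ℕ) = (x' : ℕ) + 1 := pair_succ x' y' hxy' hs'
      have hxy'2 : x < y' := by rw [Fin.lt_def]; omega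
      by_cases hs2 : SameBlock σ.part x y'
      · have hxx'sb : SameBlock σ.part x x' := sameBlock_trans hs2 (sameBlock_symm hs')
        have hxx' : x < x' := by rw [Fin.lt_def]; omega
        obtain ⟨_, c0⟩ := k1 x x' hxx' hxx'sb
        rw [cx'1] at c0
        exact absurd c0 (by decide)
      · have hle := k2 x y' hxy'2 hs2
        rw [cx1, cy'0] at hle
        exact absurd hle (by decide)
    have hbval : (b : ℕ) = (a : ℕ) + 1 := pair_succ a b hab hsb
    have ha2 : (a : ℕ) + 1 < n := by have := b.isLt; omega
    have uniq : ∀ x y : Fin n, x < y → SameBlock σ.part x y → x = a ∧ y = b := by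
      intro x y hxy hs
      have hx : x = a := by
        rcases lt_trichotomy (x : ℕ) (a : ℕ) with h' | h' | h'
        · exact absurd (no_two x y a b hxy hab hs hsb h') (fun t => t)
        · exact Fin.ext h'
        · exact absurd (no_two a b x y hab hxy hsb hs h') (fun t => t)
      refine ⟨hx, Fin.ext ?_⟩
      have := pair_succ x y hxy hs
      rw [hx] at this
      omega
    obtain ⟨ca1, cb0⟩ := k1 a b hab hsb
    refine ⟨Sum.inr ⟨a, ha2⟩, cpext ?_ ?_⟩
    · rw [FA_part_inr]
      apply finpartition_ext
      intro x y
      rw [sameBlock_ofSetoid, pairS_r]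
      show (x = y ∨ (x = a ∧ y = (⟨(a : ℕ) + 1, ha2⟩ : Fin n)) ∨
        (x = (⟨(a : ℕ) + 1, ha2⟩ : Fin n) ∧ y = a)) ↔ _
      have hbb : (⟨(a : ℕ) + 1, ha2⟩ : Fin n) = b := Fin.ext hbval.symm
      rw [hbb]
      constructor
      · rintro (rfl | ⟨rfl, rfl⟩ | ⟨rfl, rfl⟩)
        · exact sameBlock_refl _ _
        · exact hsb
        · exact sameBlock_symm hsb
      · intro hs
        rcases eq_or_ne x y with rfl | hne
        · exact Or.inl rfl
        · rcases hne.lt_or_gt with h' | h'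
          · obtain ⟨e1, e2⟩ := uniq x y h' hs
            exact Or.inr (Or.inl ⟨e1, e2⟩)
          · obtain ⟨e1, e2⟩ := uniq y x h' (sameBlock_symm hs)
            exact Or.inr (Or.inr ⟨e2, e1⟩)
    · rw [FA_col_inr]
      show colA n (a : ℕ) = σ.col
      funext x
      rcases lt_trichotomy (x : ℕ) (a : ℕ) with h' | h' | h'
      · have hxb : x < b := by rw [Fin.lt_def]; omega
        have hns : ¬ SameBlock σ.part x b := by
          intro hs
          have := (uniq x b hxb hs).1
          rw [this] at h'
          omega
        have hle := k2 x b hxb hns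
        rw [cb0] at hle
        rw [fin2_le_zero hle, colA_zero_iff]
        omega
      · have hx : x = a := Fin.ext h'
        rw [hx, ca1, colA_one_iff]
        exact Or.inl rfl
      · rcases eq_or_lt_of_le (by omega : (a : ℕ) + 1 ≤ (x : ℕ)) with h'' | h''
        · have hx : x = b := Fin.ext (by omega)
          rw [hx, cb0, colA_zero_iff]
          omega
        · have hax : a < x := by rw [Fin.lt_def]; omega
          have hns : ¬ SameBlock σ.part a x := by
            intro hs
            have := (uniq a x hax hs).2
            subst this
            omega
          have hle := k2 a x hax hns
          rw [ca1] at hle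
          rw [fin2_one_le hle, colA_one_iff]
          omega


/-! ### Surjectivity of FB -/

lemma FB_surj (σ : CPart n 2) (h : ¬ Has112 σ ∧ ¬ Has1121 σ ∧ ¬ Has1122 σ) :
    ∃ y : YT n, FB y = σ := by
  obtain ⟨k1, k2⟩ := keyB h
  by_cases htriv : ∀ i j : Fin n, SameBlock σ.part i j
  · have anti : Antitone σ.col := by
      intro i j hij
      rcases eq_or_lt_of_le hij with rfl | hlt
      · exact le_refl _
      · exact k2 i j hlt (htriv i j)
    refine ⟨Sum.inl ⟨σ.col, anti⟩, cpext ?_ rfl⟩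
    rw [FB_part_inl]
    apply finpartition_ext
    intro x y
    rw [sameBlock_ofSetoid, topS_r]
    exact ⟨fun _ => htriv x y, fun _ => trivial⟩
  · push_neg at htriv
    obtain ⟨a0, b0, hns0⟩ := htriv
    have hne0 : a0 ≠ b0 := by rintro rfl; exact hns0 (sameBlock_refl _ _)
    obtain ⟨a, b, hab, hns⟩ : ∃ a b : Fin n, a < b ∧ ¬ SameBlock σ.part a b := by
      rcases hne0.lt_or_gt with h' | h'
      · exact ⟨a0, b0, h', hns0⟩
      · exact ⟨b0, a0, h', fun hs => hns0 (sameBlock_symm hs)⟩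
    clear hns0 hne0
    obtain ⟨ca1, cb0⟩ := k1 a b hab hns
    have cross_ne : ∀ x y : Fin n, x ≠ y → ¬ SameBlock σ.part x y → σ.col x ≠ σ.col y := by
      intro x y hne hn
      rcases hne.lt_or_gt with h' | h'
      · obtain ⟨e1, e2⟩ := k1 x y h' hn
        rw [e1, e2]; decide
      · obtain ⟨e1, e2⟩ := k1 y x h' (fun hs => hn (sameBlock_symm hs))
        rw [e1, e2]; decide
    have aux : ∀ u v : Fin n, u < v → SameBlock σ.part u v → σ.col u = σ.col v := by
      intro u v huv hs
      by_contra hne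
      have hlt : σ.col v < σ.col u := lt_of_le_of_ne (k2 u v huv hs) (fun e => hne e.symm)
      obtain ⟨cu1, cv0⟩ := fin2_lt hlt
      by_cases hvb : SameBlock σ.part v b
      · have hub : SameBlock σ.part u b := sameBlock_trans hs hvb
        have hua : ¬ SameBlock σ.part u a := by
          intro hua
          exact hns (sameBlock_trans (sameBlock_symm hua) hub)
        have huane : u ≠ a := by rintro rfl; exact hua (sameBlock_refl _ _)
        apply cross_ne u a huane hua
        rw [cu1, ca1]
      · have hvbne : v ≠ b := by rintro rfl; exact hvb (sameBlock_refl _ _)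
        apply cross_ne v b hvbne hvb
        rw [cv0, cb0]
    have sb_iff : ∀ x y : Fin n, SameBlock σ.part x y ↔ σ.col x = σ.col y := by
      intro x y
      constructor
      · intro hs
        rcases lt_trichotomy x y with h' | rfl | h'
        · exact aux x y h' hs
        · rfl
        · exact (aux y x h' (sameBlock_symm hs)).symm
      · intro hc
        by_contra hn
        have hne : x ≠ y := by rintro rfl; exact hn (sameBlock_refl _ _)
        exact cross_ne x y hne hn hc
    have anti : Antitone σ.col := by
      intro i j hij
      rcases eq_or_lt_of_le hij with rfl | hlt
      · exact le_refl _
      · by_cases hs : SameBlock σ.part i j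
        · exact k2 i j hlt hs
        · rw [(k1 i j hlt hs).2]
          exact Fin.zero_le _
    set S : Finset (Fin n) := Finset.univ.filter (fun x => σ.col x = 1) with hS
    have haS : a ∈ S := by rw [hS, Finset.mem_filter]; exact ⟨Finset.mem_univ _, ca1⟩
    set i : Fin n := S.max' ⟨a, haS⟩ with hi
    have hiS : i ∈ S := S.max'_mem _
    have ci1 : σ.col i = 1 := (Finset.mem_filter.mp hiS).2
    have h1 : ∀ x : Fin n, σ.col x = 1 ↔ x ≤ i := by
      intro x
      constructor
      · intro hx
        exact S.le_max' x (Finset.mem_filter.mpr ⟨Finset.mem_univ _, hx⟩)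
      · intro hx
        exact fin2_one_le (ci1 ▸ anti hx)
    have hbi : ¬ b ≤ i := by
      intro hb
      rw [← h1] at hb
      rw [cb0] at hb
      exact absurd hb (by decide)
    have hib : (i : ℕ) < (b : ℕ) := not_le.mp hbi
    have hi2 : (i : ℕ) + 1 < n := by have := b.isLt; omega
    refine ⟨Sum.inr ⟨i, hi2⟩, cpext ?_ ?_⟩
    · rw [FB_part_inr]
      apply finpartition_ext
      intro x y
      rw [sameBlock_ofSetoid, splitS_r]
      show (((x : ℕ) ≤ (i : ℕ)) ↔ ((y : ℕ) ≤ (i : ℕ))) ↔ _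
      rw [sb_iff, fin2_eq_iff, h1, h1, Fin.le_def, Fin.le_def]
    · rw [FB_col_inr]
      show colB n (i : ℕ) = σ.col
      funext x
      by_cases hx : (x : ℕ) ≤ (i : ℕ)
      · rw [colB_one_iff.mpr hx, (h1 x).mpr (Fin.le_def.mpr hx)]
      · rw [colB_zero_iff.mpr hx]
        rcases fin2_cases (σ.col x) with e | e
        · rw [e]
        · rw [h1, Fin.le_def] at e
          exact absurd e hx

end Aux

theorem stmt18 : ∀ n : ℕ, 1 ≤ n →
    Nat.card {σ : CPart n 2 // ¬ Has11 σ ∧ ¬ Has112 σ ∧ ¬ Has1221 σ} = Nat.card {σ : CPart n 2 // ¬ Has112 σ ∧ ¬ Has1121 σ ∧ ¬ Has1122 σ} := by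
  intro n _
  have hA : Function.Bijective
      (fun x : XT n => (⟨FA x, FA_avoid x⟩ :
        {σ : CPart n 2 // ¬ Has11 σ ∧ ¬ Has112 σ ∧ ¬ Has1221 σ})) := by
    constructor
    · intro x y hxy
      exact FA_inj (congrArg Subtype.val hxy)
    · rintro ⟨σ, hσ⟩
      obtain ⟨x, hx⟩ := FA_surj σ hσ
      exact ⟨x, Subtype.ext hx⟩
  have hB : Function.Bijective
      (fun y : YT n => (⟨FB y, FB_avoid y⟩ :
        {σ : CPart n 2 // ¬ Has112 σ ∧ ¬ Has1121 σ ∧ ¬ Has1122 σ})) := by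
    constructor
    · intro x y hxy
      exact FB_inj (congrArg Subtype.val hxy)
    · rintro ⟨σ, hσ⟩
      obtain ⟨y, hy⟩ := FB_surj σ hσ
      exact ⟨y, Subtype.ext hy⟩
  calc Nat.card {σ : CPart n 2 // ¬ Has11 σ ∧ ¬ Has112 σ ∧ ¬ Has1221 σ}
      = Nat.card (XT n) := (Nat.card_eq_of_bijective _ hA).symm
    _ = Nat.card (YT n) := Nat.card_congr (Equiv.sumCongr revEquiv (Equiv.refl _))
    _ = Nat.card {σ : CPart n 2 // ¬ Has112 σ ∧ ¬ Has1121 σ ∧ ¬ Has1122 σ} :=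
        Nat.card_eq_of_bijective _ hB
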